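/- arXiv:2011.03849 — 5 statements merged into one kernel-verified Lean document; each statement's English description precedes it below -/
import Mathlib

section
/- For positive integers d₁,…,d_k and m, define R(d₁,…,d_k;m) = m·∏ᵢ dᵢ + Σ_{n=1}^{k} (−1)ⁿ Σ_{1≤i₁<⋯<i_n≤k} gcd(d_{i₁},…,d_{i_n})². If d_k = m·d₁⋯d_{k−1}, then R(d₁,…,d_k;m) = 0. -/
/-! When every `d j` divides `d_last`, adjoining the last index to a nonempty set of indices does not
change the gcd, so in the alternating sum the subsets `T` and `insert last T` cancel in pairs. Only
`∅` and `{last}` survive, contributing `0² - d_last²`, while `d_last = m ∏_{i<last} d i` makes the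
product term `m ∏ d = d_last²`. -/

/-- `R(d₁,…,d_k;m) = m·∏ᵢ dᵢ + Σ_{n=1}^k (−1)ⁿ Σ_{1≤i₁<⋯<i_n≤k} gcd(d_{i₁},…,d_{i_n})²`,
written as a sum over nonempty subsets `S` of the index set. -/
def Rval {k : ℕ} (d : Fin k → ℕ) (m : ℕ) : ℤ :=
  (m : ℤ) * ∏ i, (d i : ℤ) +
    ∑ S ∈ Finset.univ.powerset.filter (fun S : Finset (Fin k) => S.Nonempty),
      (-1) ^ S.card * ((S.gcd d : ℕ) : ℤ) ^ 2

namespace Finset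

theorem sum_powerset_insert_neg_one_pow_card_mul {ι R : Type*} [DecidableEq ι] [Ring R]
    {s : Finset ι} {a : ι} (ha : a ∉ s) (g : Finset ι → R)
    (hg : ∀ T ⊆ s, T.Nonempty → g (insert a T) = g T) :
    ∑ T ∈ (insert a s).powerset, (-1) ^ T.card * g T = g ∅ - g {a} := by
  rw [sum_powerset_insert ha, ← sum_add_distrib, sum_eq_single (∅ : Finset ι)]
  · simp [sub_eq_add_neg]
  · intro T hT hTne
    have hTs : T ⊆ s := mem_powerset.mp hT
    have haT : a ∉ T := fun h => ha (hTs h)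
    rw [hg T hTs (nonempty_iff_ne_empty.mpr hTne), card_insert_of_notMem haT, pow_succ]
    noncomm_ring
  · simp

theorem gcd_insert_of_dvd {ι α : Type*} [DecidableEq ι] [CommMonoidWithZero α]
    [NormalizedGCDMonoid α] {f : ι → α} {T : Finset ι} {a j : ι} (hj : j ∈ T) (h : f j ∣ f a) :
    (insert a T).gcd f = T.gcd f := by
  rw [gcd_insert, gcd_eq_right_iff _ _ normalize_gcd]
  exact (gcd_dvd hj).trans h

end Finset

open Finset

theorem sum_powerset_neg_one_pow_card_mul_gcd_sq_of_forall_dvd {ι : Type*} [Fintype ι]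
    [DecidableEq ι] {d : ι → ℕ} {a : ι} (hdvd : ∀ j, d j ∣ d a) :
    ∑ S ∈ (univ : Finset ι).powerset, (-1 : ℤ) ^ S.card * ((S.gcd d : ℕ) : ℤ) ^ 2
      = -(d a : ℤ) ^ 2 := by
  rw [← insert_erase (mem_univ a),
    sum_powerset_insert_neg_one_pow_card_mul (notMem_erase a univ)]
  · simp
  · rintro T - ⟨j, hj⟩
    rw [gcd_insert_of_dvd hj (hdvd j)]

theorem Fin.dvd_last_of_eq_mul_prod {M : Type*} [CommMonoid M] {k : ℕ} {d : Fin (k + 1) → M}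
    {m : M} (hlast : d (Fin.last k) = m * ∏ i : Fin k, d i.castSucc) (j : Fin (k + 1)) :
    d j ∣ d (Fin.last k) := by
  rcases Fin.eq_castSucc_or_eq_last j with ⟨i, rfl⟩ | rfl
  · rw [hlast]
    exact (dvd_prod_of_mem _ (mem_univ i)).mul_left m
  · exact dvd_rfl

theorem Rval_eq_add_sum_powerset {k : ℕ} (d : Fin k → ℕ) (m : ℕ) :
    Rval d m = (m : ℤ) * ∏ i, (d i : ℤ) +
      ∑ S ∈ (univ : Finset (Fin k)).powerset, (-1) ^ S.card * ((S.gcd d : ℕ) : ℤ) ^ 2 := by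
  rw [Rval, sum_filter_of_ne]
  rintro S - hS
  rw [nonempty_iff_ne_empty]
  rintro rfl
  simp at hS

theorem stmt0_general (k m : ℕ) (d : Fin (k + 1) → ℕ)
    (hlast : d (Fin.last k) = m * ∏ i : Fin k, d i.castSucc) :
    Rval d m = 0 := by
  classical
  have hprod : (m : ℤ) * ∏ i, (d i : ℤ) = (d (Fin.last k) : ℤ) ^ 2 := by
    rw [Fin.prod_univ_castSucc, ← mul_assoc, hlast]
    push_cast
    ring
  rw [Rval_eq_add_sum_powerset, hprod,
    sum_powerset_neg_one_pow_card_mul_gcd_sq_of_forall_dvd (Fin.dvd_last_of_eq_mul_prod hlast)]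
  ring

theorem stmt0 (k m : ℕ) (hm : 0 < m) (d : Fin (k + 1) → ℕ) (hd : ∀ i, 0 < d i)
    (hmono : Monotone d)
    (hlast : d (Fin.last k) = m * ∏ i : Fin k, d i.castSucc) :
    Rval d m = 0 :=
  stmt0_general k m d hlast
end

section
/- For positive integers d₁,…,d_k and m with d₁ ≤ ⋯ ≤ d_k, if d_k > m·d₁⋯d_{k−1}, then R(d₁,…,d_k;m) < 0, where R(d₁,…,d_k;m) = m·∏ᵢ dᵢ + Σ_{n=1}^{k} (−1)ⁿ Σ_{1≤i₁<⋯<i_n≤k} gcd(d_{i₁},…,d_{i_n})². -/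
open Finset

theorem IsAddCyclic.card_nsmul_eq_zero {α : Type*} [AddGroup α] [IsAddCyclic α] [Fintype α]
    [DecidableEq α] {g : ℕ} (hg : g ∣ Fintype.card α) : #{a : α | g • a = 0} = g := by
  have hg0 : g ≠ 0 := by rintro rfl; simp at hg
  rw [← sum_card_addOrderOf_eq_card_nsmul_eq_zero hg0,
    sum_congr rfl fun m hm => IsAddCyclic.card_addOrderOf_eq_totient
      ((Nat.dvd_of_mem_divisors hm).trans hg), Nat.sum_totient]

theorem IsAddCyclic.card_prod_nsmul_eq_zero {α : Type*} [AddGroup α] [IsAddCyclic α] [Fintype α]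
    [DecidableEq α] {g : ℕ} (hg : g ∣ Fintype.card α) : #{p : α × α | g • p = 0} = g ^ 2 := by
  have : univ.filter (fun p : α × α => g • p = 0) =
      univ.filter (fun a : α => g • a = 0) ×ˢ univ.filter (fun a : α => g • a = 0) := by
    ext p; simp [Prod.ext_iff]
  rw [this, card_product, card_nsmul_eq_zero hg, sq]

theorem Finset.inf'_filter_nsmul_eq_zero {ι G : Type*} [AddMonoid G] [Fintype G] [DecidableEq G]
    (d : ι → ℕ) (S : Finset ι) (hS : S.Nonempty) :
    S.inf' hS (fun i => univ.filter fun x : G => d i • x = 0) =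
      univ.filter fun x : G => S.gcd d • x = 0 := by
  ext x
  simp [← addOrderOf_dvd_iff_nsmul_eq_zero, Finset.dvd_gcd_iff]

theorem card_biUnion_filter_nsmul_eq_zero {ι G : Type*} [AddMonoid G] [Fintype G] [DecidableEq G]
    (d : ι → ℕ) (s : Finset ι) :
    (#(s.biUnion fun i => univ.filter fun x : G => d i • x = 0) : ℤ) =
      ∑ t ∈ s.powerset.filter (·.Nonempty), (-1) ^ (#t + 1) * (#{x : G | t.gcd d • x = 0} : ℤ) := by
  rw [inclusion_exclusion_card_biUnion, ← sum_coe_sort _ fun t => (-1 : ℤ) ^ (#t + 1) * _]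
  refine sum_congr rfl fun t _ => ?_
  rw [inf'_filter_nsmul_eq_zero]

theorem Rval_eq_sub_card_biUnion {k N : ℕ} [NeZero N] (d : Fin k → ℕ) (hdN : ∀ i, d i ∣ N)
    (m : ℕ) : Rval d m = m * ∏ i, (d i : ℤ) -
      #(univ.biUnion fun i => univ.filter fun x : ZMod N × ZMod N => d i • x = 0) := by
  rw [Rval, card_biUnion_filter_nsmul_eq_zero, sub_eq_add_neg, ← sum_neg_distrib]
  refine congrArg _ (sum_congr rfl fun S hS => ?_)
  obtain ⟨i, hi⟩ := (mem_filter.1 hS).2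
  rw [IsAddCyclic.card_prod_nsmul_eq_zero (by simpa using (gcd_dvd hi).trans (hdN i))]
  push_cast
  ring

theorem stmt1_general (k m : ℕ) (d : Fin (k + 1) → ℕ) (hd : ∀ i, 0 < d i)
    (hlast : d (Fin.last k) > m * ∏ i : Fin k, d i.castSucc) :
    Rval d m < 0 := by
  set P := ∏ i, d i
  have : NeZero P := ⟨(prod_pos fun i _ => hd i).ne'⟩
  have hdP : ∀ i, d i ∣ P := fun i => dvd_prod_of_mem d (mem_univ i)
  set A := fun i => univ.filter fun x : ZMod P × ZMod P => d i • x = 0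
  set last := Fin.last k
  rw [Rval_eq_sub_card_biUnion d hdP, sub_neg]
  calc (m : ℤ) * ∏ i, (d i : ℤ) = ((m * ∏ i : Fin k, d i.castSucc) * d last : ℕ) := by
        push_cast [Fin.prod_univ_castSucc]; ring
    _ < (d last * d last : ℕ) := by exact_mod_cast Nat.mul_lt_mul_of_pos_right hlast (hd last)
    _ = #(A last) := by
        rw [IsAddCyclic.card_prod_nsmul_eq_zero (by simpa using hdP last)]; push_cast; ring
    _ ≤ #(univ.biUnion A) := by
        exact_mod_cast card_le_card (subset_biUnion_of_mem A (mem_univ last))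

theorem stmt1 (k m : ℕ) (hm : 0 < m) (d : Fin (k + 1) → ℕ) (hd : ∀ i, 0 < d i)
    (hmono : Monotone d)
    (hlast : d (Fin.last k) > m * ∏ i : Fin k, d i.castSucc) :
    Rval d m < 0 :=
  stmt1_general k m d hd hlast
end

section
/- For positive integers d₁,…,d_k and m ≥ 2 with 2 ≤ d₁ ≤ ⋯ ≤ d_k and k ≥ 2, if d_k ≤ (m·d₁⋯d_{k−1})/2, then R(d₁,…,d_k;m) > 0, where R is defined by R(d₁,…,d_k;m) = m·∏ᵢ dᵢ + Σ_{n=1}^{k} (−1)ⁿ Σ_{1≤i₁<⋯<i_n≤k} gcd(d_{i₁},…,d_{i_n})². -/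
open Finset ArithmeticFunction
open scoped ArithmeticFunction.Moebius

noncomputable def jordanTotient₂ : ArithmeticFunction ℤ :=
  μ * ((pow 2 : ArithmeticFunction ℕ) : ArithmeticFunction ℤ)

namespace jordanTotient₂

lemma isMultiplicative : jordanTotient₂.IsMultiplicative :=
  isMultiplicative_moebius.mul isMultiplicative_pow.natCast

lemma sum_divisors (n : ℕ) : ∑ e ∈ n.divisors, jordanTotient₂ e = (n : ℤ) ^ 2 := by
  rw [← coe_zeta_mul_apply, jordanTotient₂, ← mul_assoc, coe_zeta_mul_moebius, one_mul,
    natCoe_apply, pow_apply]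
  simp

lemma prime_pow_nonneg {p : ℕ} (hp : p.Prime) (j : ℕ) : 0 ≤ jordanTotient₂ (p ^ j) := by
  cases j with
  | zero => simp [isMultiplicative.map_one]
  | succ j =>
    have hsum (i : ℕ) : ∑ l ∈ range (i + 1), jordanTotient₂ (p ^ l) = ((p ^ i : ℕ) : ℤ) ^ 2 := by
      rw [← Nat.sum_divisors_prime_pow hp, sum_divisors]
    have hle : ((p ^ j : ℕ) : ℤ) ^ 2 ≤ ((p ^ (j + 1) : ℕ) : ℤ) ^ 2 := by
      have : p ^ j ≤ p ^ (j + 1) := Nat.pow_le_pow_right hp.pos j.le_succ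
      gcongr
    have hsucc := hsum (j + 1)
    rw [sum_range_succ, hsum j] at hsucc
    linarith

lemma nonneg (n : ℕ) : 0 ≤ jordanTotient₂ n := by
  rcases eq_or_ne n 0 with rfl | hn
  · simp
  rw [isMultiplicative.multiplicative_factorization _ hn, Finsupp.prod]
  exact prod_nonneg fun p hp => prime_pow_nonneg (Nat.prime_of_mem_primeFactors hp) _

end jordanTotient₂

lemma Finset.inf'_divisors_eq_divisors_gcd {ι : Type*} {S : Finset ι} (hS : S.Nonempty)
    {d : ι → ℕ} (hd : ∀ i ∈ S, d i ≠ 0) :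
    S.inf' hS (fun i => (d i).divisors) = (S.gcd d).divisors := by
  have hgcd : S.gcd d ≠ 0 := fun h =>
    hd _ hS.choose_spec (gcd_eq_zero_iff.1 h _ hS.choose_spec)
  ext e
  simp only [mem_inf', Nat.mem_divisors, dvd_gcd_iff, ne_eq, hgcd, not_false_eq_true, and_true]
  exact forall₂_congr fun j hj => and_iff_left (hd j hj)

lemma Finset.sum_neg_one_pow_card_mul_gcd_sq {ι : Type*} (s : Finset ι) {d : ι → ℕ}
    (hd : ∀ i ∈ s, d i ≠ 0) :
    ∑ S ∈ s.powerset.filter (·.Nonempty), (-1 : ℤ) ^ #S * ((S.gcd d : ℕ) : ℤ) ^ 2 =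
      -∑ e ∈ s.biUnion (fun i => (d i).divisors), jordanTotient₂ e := by
  rw [inclusion_exclusion_sum_biUnion, ← sum_neg_distrib, ← sum_coe_sort]
  refine sum_congr rfl fun S _ => ?_
  have hS := mem_filter.1 S.2
  rw [inf'_divisors_eq_divisors_gcd _ fun i hi => hd i (mem_powerset.1 hS.1 hi),
    jordanTotient₂.sum_divisors]
  simp [pow_succ]

lemma Finset.sum_biUnion_le_sum_sum {ι α M : Type*} [DecidableEq α] [AddCommMonoid M]
    [PartialOrder M] [IsOrderedAddMonoid M] (s : Finset ι) (t : ι → Finset α) {f : α → M}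
    (hf : ∀ a, 0 ≤ f a) :
    ∑ a ∈ s.biUnion t, f a ≤ ∑ i ∈ s, ∑ a ∈ t i, f a := by
  rw [← sup_eq_biUnion]
  refine apply_sup_le_sum (f := fun A => ∑ a ∈ A, f a) sum_empty (fun {A B} => ?_) s
  rw [sup_eq_union, ← sum_union_inter]
  exact le_add_of_nonneg_right (sum_nonneg fun a _ => hf a)

lemma jordanTotient₂.sum_biUnion_divisors_add_card_le {ι : Type*} (s : Finset ι) {d : ι → ℕ}
    (hd : ∀ i ∈ s, d i ≠ 0) :
    ∑ e ∈ s.biUnion (fun i => (d i).divisors), jordanTotient₂ e + #s ≤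
      ∑ i ∈ s, (d i : ℤ) ^ 2 + 1 := by
  have hproper (i : ι) (hi : i ∈ s) :
      ∑ e ∈ (d i).divisors.erase 1, jordanTotient₂ e = (d i : ℤ) ^ 2 - 1 := by
    rw [sum_erase_eq_sub (Nat.one_mem_divisors.2 (hd i hi)), sum_divisors,
      isMultiplicative.map_one]
  calc ∑ e ∈ s.biUnion (fun i => (d i).divisors), jordanTotient₂ e + #s
      ≤ ∑ e ∈ insert 1 ((s.biUnion fun i => (d i).divisors).erase 1), jordanTotient₂ e + #s := by
        gcongr
        · exact fun e _ _ => nonneg e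
        · exact insert_erase_subset _ _
    _ = 1 + ∑ e ∈ s.biUnion (fun i => (d i).divisors.erase 1), jordanTotient₂ e + #s := by
        rw [sum_insert (notMem_erase 1 _), erase_biUnion, isMultiplicative.map_one]
    _ ≤ 1 + ∑ i ∈ s, ∑ e ∈ (d i).divisors.erase 1, jordanTotient₂ e + #s := by
        gcongr
        exact sum_biUnion_le_sum_sum _ _ nonneg
    _ = ∑ i ∈ s, (d i : ℤ) ^ 2 + 1 := by
        rw [sum_congr rfl hproper, sum_sub_distrib]
        simp only [sum_const, nsmul_eq_mul, mul_one]
        ring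

lemma Finset.sum_le_prod_of_two_le {ι : Type*} {s : Finset ι} {f : ι → ℕ}
    (hf : ∀ i ∈ s, 2 ≤ f i) : ∑ i ∈ s, f i ≤ ∏ i ∈ s, f i := by
  induction s using cons_induction with
  | empty => simp
  | cons a s _ ih =>
    rw [sum_cons, prod_cons]
    have ha2 := hf a (mem_cons_self a s)
    have ih := ih fun i hi => hf i (mem_cons_of_mem hi)
    rcases s.eq_empty_or_nonempty with rfl | ⟨j, hj⟩
    · simp
    · have hprod : 2 ≤ ∏ i ∈ s, f i :=
        (hf j (mem_cons_of_mem hj)).trans <| single_le_prod'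
          (fun i hi => one_le_two.trans (hf i (mem_cons_of_mem hi))) hj
      nlinarith

lemma sum_sq_add_sq_le_mul_prod_mul {ι : Type*} {s : Finset ι} {a : ι → ℕ} {L m : ℕ}
    (hm : 2 ≤ m) (ha : ∀ i ∈ s, 2 ≤ a i) (haL : ∀ i ∈ s, a i ≤ L)
    (hL : 2 * L ≤ m * ∏ i ∈ s, a i) :
    ∑ i ∈ s, a i ^ 2 + L ^ 2 ≤ m * ((∏ i ∈ s, a i) * L) := by
  set P := ∏ i ∈ s, a i
  have hsum : ∑ i ∈ s, a i ^ 2 ≤ P * L :=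
    calc ∑ i ∈ s, a i ^ 2 ≤ ∑ i ∈ s, a i * L := sum_le_sum fun i hi => by
          rw [sq]; exact Nat.mul_le_mul_left _ (haL i hi)
      _ = (∑ i ∈ s, a i) * L := (sum_mul ..).symm
      _ ≤ P * L := Nat.mul_le_mul_right _ (sum_le_prod_of_two_le ha)
  have hLsq : 2 * L ^ 2 ≤ m * (P * L) := by
    nlinarith [Nat.mul_le_mul_right L hL]
  nlinarith [Nat.mul_le_mul_right (P * L) hm]

lemma Rval_eq_sub_sum_jordanTotient₂ {k : ℕ} {d : Fin k → ℕ} (hd : ∀ i, d i ≠ 0) (m : ℕ) :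
    Rval d m =
      m * ∏ i, (d i : ℤ) - ∑ e ∈ univ.biUnion (fun i => (d i).divisors), jordanTotient₂ e := by
  rw [Rval, sum_neg_one_pow_card_mul_gcd_sq _ fun i _ => hd i, sub_eq_add_neg]

theorem stmt2 (k m : ℕ) (hm : 2 ≤ m) (d : Fin (k + 2) → ℕ)
    (hd : 2 ≤ d 0) (hmono : Monotone d)
    (hlast : 2 * d (Fin.last (k + 1)) ≤ m * ∏ i : Fin (k + 1), d i.castSucc) :
    0 < Rval d m := by
  have hd2 (i : Fin (k + 2)) : 2 ≤ d i := hd.trans (hmono (Fin.zero_le i))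
  have hd0 (i : Fin (k + 2)) : d i ≠ 0 := by have := hd2 i; omega
  have hsq : ∑ i, d i ^ 2 ≤ m * ∏ i, d i := by
    rw [Fin.sum_univ_castSucc, Fin.prod_univ_castSucc]
    exact sum_sq_add_sq_le_mul_prod_mul hm (fun i _ => hd2 _) (fun i _ => hmono (Fin.le_last _))
      hlast
  have hunion := jordanTotient₂.sum_biUnion_divisors_add_card_le univ fun i _ => hd0 i
  rw [card_univ, Fintype.card_fin] at hunion
  zify at hsq
  rw [Rval_eq_sub_sum_jordanTotient₂ hd0]
  push_cast at hunion
  linarith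
end

section
/- For positive integers d₁,…,d_k and m ≥ 2 with 2 ≤ d₁ ≤ ⋯ ≤ d_k, k ≥ 2, and 2·d_k ≤ m·d₁⋯d_{k−1}, one has R(d₁,…,d_k;m) ≥ g_max², where g_max = max_{i<j} gcd(dᵢ,dⱼ), with R as defined. Moreover, equality holds if and only if k = 2, m = 2, and d₁ = d₂. -/
/-- `g_max(d₁,…,d_k) = max_{i<j} gcd(dᵢ,dⱼ)`. -/
def gmax {k : ℕ} (d : Fin k → ℕ) : ℕ :=
  (Finset.univ.filter (fun p : Fin k × Fin k => p.1 < p.2)).sup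
    (fun p => Nat.gcd (d p.1) (d p.2))

/-!
Weight a pair `(a, b)` of positive integers by `φ a * φ b`. Since `∑_{a ∣ n} φ a = n`, the pairs
of divisors of `n` have total weight `n²`, and the pairs dividing each of `d i` (`i ∈ S`) are the
pairs of divisors of `gcd_S d`. Inclusion–exclusion therefore gives `R = m ∏ dᵢ - W`, where `W` is
the weight of the union of the sets of divisor pairs of the `dᵢ`. Counting the overlap of two of
these sets shows `W + gcd(d_p, d_q)² ≤ ∑ dᵢ²`, and elementary estimates give `∑ dᵢ² ≤ m ∏ dᵢ`,
strictly unless there are only two numbers, `m = 2` and `d₁ = d₂`.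
-/

open Finset
open scoped Nat

namespace Finset

variable {ι α M : Type*} [DecidableEq α] [AddCommMonoid M] [PartialOrder M] [IsOrderedAddMonoid M]
  {f : α → M}

lemma sum_union_le (hf : ∀ x, 0 ≤ f x) (s t : Finset α) :
    ∑ x ∈ s ∪ t, f x ≤ ∑ x ∈ s, f x + ∑ x ∈ t, f x := by
  rw [← sum_union_inter]
  exact le_add_of_nonneg_right (sum_nonneg fun x _ => hf x)

lemma sum_biUnion_le_sum_sum_s3 (hf : ∀ x, 0 ≤ f x) (s : Finset ι) (A : ι → Finset α) :
    ∑ x ∈ s.biUnion A, f x ≤ ∑ i ∈ s, ∑ x ∈ A i, f x := by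
  classical
  induction s using Finset.induction_on with
  | empty => simp
  | insert a s ha ih =>
    rw [biUnion_insert, sum_insert ha]
    exact (sum_union_le hf _ _).trans (add_le_add_right ih _)

lemma sum_biUnion_add_sum_inter_le [DecidableEq ι] (hf : ∀ x, 0 ≤ f x) {s : Finset ι}
    (A : ι → Finset α) {p q : ι} (hp : p ∈ s) (hq : q ∈ s) (hpq : p ≠ q) :
    ∑ x ∈ s.biUnion A, f x + ∑ x ∈ A p ∩ A q, f x ≤ ∑ i ∈ s, ∑ x ∈ A i, f x := by
  have hsplit : s.biUnion A = A p ∪ (s.erase p).biUnion A := by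
    rw [← biUnion_insert, insert_erase hp]
  have hinter : A p ∩ A q ⊆ A p ∩ (s.erase p).biUnion A :=
    inter_subset_inter_left (subset_biUnion_of_mem A (mem_erase.2 ⟨hpq.symm, hq⟩))
  calc ∑ x ∈ s.biUnion A, f x + ∑ x ∈ A p ∩ A q, f x
      ≤ ∑ x ∈ A p ∪ (s.erase p).biUnion A, f x + ∑ x ∈ A p ∩ (s.erase p).biUnion A, f x := by
        rw [hsplit]
        exact add_le_add_right (sum_le_sum_of_subset_of_nonneg hinter fun x _ _ => hf x) _
    _ = ∑ x ∈ A p, f x + ∑ x ∈ (s.erase p).biUnion A, f x := sum_union_inter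
    _ ≤ ∑ x ∈ A p, f x + ∑ i ∈ s.erase p, ∑ x ∈ A i, f x :=
        add_le_add_right (sum_biUnion_le_sum_sum_s3 hf _ _) _
    _ = ∑ i ∈ s, ∑ x ∈ A i, f x := add_sum_erase s (fun i => ∑ x ∈ A i, f x) hp

lemma sum_le_prod_of_two_le_s3 {f : ι → ℕ} {s : Finset ι} (hf : ∀ i ∈ s, 2 ≤ f i) :
    ∑ i ∈ s, f i ≤ ∏ i ∈ s, f i := by
  classical
  induction s using Finset.induction_on with
  | empty => simp
  | insert a s ha ih =>
    rw [sum_insert ha, prod_insert ha]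
    have ha2 := hf a (mem_insert_self a s)
    have ih := ih fun i hi => hf i (mem_insert_of_mem hi)
    rcases s.eq_empty_or_nonempty with rfl | ⟨b, hb⟩
    · simp
    · have hP : 2 ≤ ∏ i ∈ s, f i :=
        (hf b (mem_insert_of_mem hb)).trans (ih.trans' (single_le_sum (by simp) hb))
      nlinarith

lemma sum_sq_le_mul_prod_of_le {f : ι → ℕ} {s : Finset ι} {a : ℕ} (hf : ∀ i ∈ s, 2 ≤ f i)
    (ha : ∀ i ∈ s, f i ≤ a) : ∑ i ∈ s, f i ^ 2 ≤ a * ∏ i ∈ s, f i :=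
  calc ∑ i ∈ s, f i ^ 2 ≤ ∑ i ∈ s, a * f i :=
        sum_le_sum fun i hi => by rw [sq]; exact Nat.mul_le_mul_right _ (ha i hi)
    _ = a * ∑ i ∈ s, f i := (mul_sum ..).symm
    _ ≤ a * ∏ i ∈ s, f i := Nat.mul_le_mul_left _ (sum_le_prod_of_two_le_s3 hf)

end Finset

def divisorPairs (n : ℕ) : Finset (ℕ × ℕ) := n.divisors ×ˢ n.divisors

lemma mem_divisorPairs {n : ℕ} {x : ℕ × ℕ} : x ∈ divisorPairs n ↔ x.1 ∣ n ∧ x.2 ∣ n ∧ n ≠ 0 := by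
  simp only [divisorPairs, mem_product, Nat.mem_divisors]
  tauto

lemma sum_totient_mul_totient_divisorPairs (n : ℕ) :
    ∑ x ∈ divisorPairs n, φ x.1 * φ x.2 = n ^ 2 := by
  rw [divisorPairs, sum_product, ← sum_mul_sum, Nat.sum_totient, sq]

lemma divisorPairs_gcd {a b : ℕ} (ha : a ≠ 0) (hb : b ≠ 0) :
    divisorPairs (a.gcd b) = divisorPairs a ∩ divisorPairs b := by
  ext x
  simp only [mem_inter, mem_divisorPairs, Nat.dvd_gcd_iff, ne_eq, Nat.gcd_eq_zero_iff]
  tauto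

lemma inf'_divisorPairs {ι : Type*} {s : Finset ι} (hs : s.Nonempty) {d : ι → ℕ}
    (hd : ∀ i ∈ s, d i ≠ 0) : s.inf' hs (fun i => divisorPairs (d i)) = divisorPairs (s.gcd d) := by
  obtain ⟨i₀, hi₀⟩ := id hs
  have hgcd : s.gcd d ≠ 0 := fun h => hd i₀ hi₀ (gcd_eq_zero_iff.1 h i₀ hi₀)
  ext x
  simp only [mem_inf', mem_divisorPairs, Finset.dvd_gcd_iff]
  exact ⟨fun h => ⟨fun i hi => (h i hi).1, fun i hi => (h i hi).2.1, hgcd⟩,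
    fun h i hi => ⟨h.1 i hi, h.2.1 i hi, hd i hi⟩⟩

lemma Rval_eq_sub_sum_totient {k : ℕ} (d : Fin k → ℕ) (hd : ∀ i, d i ≠ 0) (m : ℕ) :
    Rval d m = m * ∏ i, (d i : ℤ) -
      ((∑ x ∈ univ.biUnion (fun i => divisorPairs (d i)), φ x.1 * φ x.2 : ℕ) : ℤ) := by
  push_cast
  rw [inclusion_exclusion_sum_biUnion, Rval, sub_eq_add_neg, ← sum_neg_distrib]
  congr 1
  rw [← sum_coe_sort]
  refine sum_congr rfl fun S _ => ?_
  rw [inf'_divisorPairs _ fun i _ => hd i]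
  simp only [← Nat.cast_mul, ← Nat.cast_sum, sum_totient_mul_totient_divisorPairs]
  simp [pow_succ]

lemma sq_add_sq_le_mul_mul {a b m : ℕ} (hab : a ≤ b) (hb : 2 * b ≤ m * a) :
    a ^ 2 + b ^ 2 ≤ m * (a * b) := by
  nlinarith

lemma sq_add_sq_eq_mul_mul_iff {a b m : ℕ} (ha : 0 < a) (hab : a ≤ b) (hb : 2 * b ≤ m * a) :
    a ^ 2 + b ^ 2 = m * (a * b) ↔ m = 2 ∧ a = b := by
  constructor
  · intro h
    have hab' : a = b := by nlinarith
    subst hab'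
    exact ⟨by nlinarith, rfl⟩
  · rintro ⟨rfl, rfl⟩
    ring

lemma mul_add_sq_lt_mul_mul {a P L m : ℕ} (ha : 0 < a) (h2a : 2 * a ≤ P) (haL : a ≤ L)
    (hL : 2 * L ≤ m * P) (hm : 2 ≤ m) : a * P + L ^ 2 < m * (P * L) := by
  have hPL : 0 < P * L := Nat.mul_pos (by omega) (by omega)
  rcases le_or_gt P L with hPL' | hLP
  · nlinarith
  · nlinarith

lemma sum_sq_lt_mul_prod {k m : ℕ} (hm : 2 ≤ m) {d : Fin (k + 3) → ℕ} (h2 : ∀ i, 2 ≤ d i)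
    (hmono : Monotone d) (hlast : 2 * d (Fin.last (k + 2)) ≤ m * ∏ i : Fin (k + 2), d i.castSucc) :
    ∑ i, d i ^ 2 < m * ∏ i, d i := by
  set a := d (Fin.last (k + 1)).castSucc
  set P := ∏ i : Fin (k + 2), d i.castSucc with hP
  have hQ : 2 ≤ ∏ i : Fin (k + 1), d i.castSucc.castSucc :=
    (h2 _).trans (single_le_prod' (f := fun i : Fin (k + 1) => d i.castSucc.castSucc)
      (fun i _ => one_le_two.trans (h2 _)) (mem_univ 0))
  have h2a : 2 * a ≤ P := by
    rw [hP, Fin.prod_univ_castSucc]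
    exact Nat.mul_le_mul_right a hQ
  have hsum : ∑ i : Fin (k + 2), d i.castSucc ^ 2 ≤ a * P :=
    sum_sq_le_mul_prod_of_le (fun i _ => h2 _) fun i _ =>
      hmono (Fin.castSucc_le_castSucc_iff.2 (Fin.le_last i))
  rw [Fin.sum_univ_castSucc, Fin.prod_univ_castSucc]
  exact (Nat.add_le_add_right hsum _).trans_lt
    (mul_add_sq_lt_mul_mul (two_pos.trans_le (h2 _)) h2a (hmono (Fin.le_last _)) hlast hm)

lemma sum_sq_le_mul_prod {k m : ℕ} (hm : 2 ≤ m) {d : Fin (k + 2) → ℕ} (h2 : ∀ i, 2 ≤ d i)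
    (hmono : Monotone d) (hlast : 2 * d (Fin.last (k + 1)) ≤ m * ∏ i : Fin (k + 1), d i.castSucc) :
    ∑ i, d i ^ 2 ≤ m * ∏ i, d i ∧
      (∑ i, d i ^ 2 = m * ∏ i, d i ↔ k = 0 ∧ m = 2 ∧ ∀ i j, d i = d j) := by
  rcases k with _ | k
  · have h01 : d 0 ≤ d 1 := hmono (Fin.zero_le 1)
    replace hlast : 2 * d 1 ≤ m * d 0 := by simpa using hlast
    rw [Fin.sum_univ_two, Fin.prod_univ_two,
      sq_add_sq_eq_mul_mul_iff (two_pos.trans_le (h2 0)) h01 hlast]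
    refine ⟨sq_add_sq_le_mul_mul h01 hlast, ?_⟩
    simp [Fin.forall_fin_two, eq_comm]
  · have hlt := sum_sq_lt_mul_prod hm h2 hmono hlast
    exact ⟨hlt.le, iff_of_false hlt.ne fun h => k.succ_ne_zero h.1⟩

lemma exists_gmax_eq_gcd {k : ℕ} (d : Fin (k + 2) → ℕ) :
    ∃ p q, p ≠ q ∧ gmax d = (d p).gcd (d q) := by
  have hne : (univ.filter fun p : Fin (k + 2) × Fin (k + 2) => p.1 < p.2).Nonempty :=
    ⟨(0, 1), mem_filter.2 ⟨mem_univ _, Fin.zero_lt_one⟩⟩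
  obtain ⟨pq, hpq, h⟩ := exists_mem_eq_sup _ hne fun p => (d p.1).gcd (d p.2)
  exact ⟨pq.1, pq.2, (mem_filter.1 hpq).2.ne, h⟩

theorem stmt3 (k m : ℕ) (hm : 2 ≤ m) (d : Fin (k + 2) → ℕ)
    (hd : 2 ≤ d 0) (hmono : Monotone d)
    (hlast : 2 * d (Fin.last (k + 1)) ≤ m * ∏ i : Fin (k + 1), d i.castSucc) :
    ((gmax d : ℤ)) ^ 2 ≤ Rval d m ∧
      (Rval d m = ((gmax d : ℤ)) ^ 2 ↔ (k = 0 ∧ m = 2 ∧ ∀ i j, d i = d j)) := by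
  have h2 : ∀ i, 2 ≤ d i := fun i => hd.trans (hmono (Fin.zero_le i))
  have hd0 : ∀ i, d i ≠ 0 := fun i => (two_pos.trans_le (h2 i)).ne'
  obtain ⟨p, q, hpq, hg⟩ := exists_gmax_eq_gcd d
  obtain ⟨hsq, hsq_eq⟩ := sum_sq_le_mul_prod hm h2 hmono hlast
  set W := ∑ x ∈ univ.biUnion (fun i => divisorPairs (d i)), φ x.1 * φ x.2
  have hW : W + gmax d ^ 2 ≤ ∑ i, d i ^ 2 := by
    have := sum_biUnion_add_sum_inter_le (fun _ => Nat.zero_le _) (fun i => divisorPairs (d i))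
      (f := fun x => φ x.1 * φ x.2) (mem_univ p) (mem_univ q) hpq
    simpa only [← divisorPairs_gcd (hd0 p) (hd0 q), sum_totient_mul_totient_divisorPairs, ← hg]
      using this
  have hR : Rval d m = ((m * ∏ i, d i : ℕ) : ℤ) - W := by
    push_cast
    exact Rval_eq_sub_sum_totient d hd0 m
  rw [hR, le_sub_iff_add_le', sub_eq_iff_eq_add']
  refine ⟨by exact_mod_cast hW.trans hsq, ⟨fun h => hsq_eq.1 (hsq.antisymm ?_), ?_⟩⟩
  · exact (Nat.cast_injective h).trans_le hW
  · rintro ⟨rfl, rfl, hconst⟩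
    have hunion : univ.biUnion (fun i => divisorPairs (d i)) = divisorPairs (d 0) := by
      ext x
      simp only [mem_biUnion, mem_univ, true_and]
      exact ⟨fun ⟨i, hi⟩ => hconst i 0 ▸ hi, fun hx => ⟨0, hx⟩⟩
    have hW' : W = d 0 ^ 2 := by rw [← sum_totient_mul_totient_divisorPairs, ← hunion]
    have hg' : gmax d = d 0 := by rw [hg, hconst p 0, hconst q 0, Nat.gcd_self]
    rw [hW', hg', Fin.prod_univ_two, hconst 1 0]
    push_cast
    ring
end

section
/- Let F be a field. If X ⊆ Fᵐ and Y ⊆ Fⁿ are affine F-varieties (zero loci of polynomial collections), then the projection map π : X × Y → X is open with respect to the Zariski topology. -/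
/-!
Substituting a point `y` for the second block of variables turns `p` into a polynomial
`p(-, y)` in the first block with `p(-, y)(x) = p(x, y)`. So the image of the complement of
`V(P)` in `X × Y` is `X` minus the common zero locus of all `p(-, y)` with `p ∈ P`, `y ∈ Y`.
-/

namespace MvPolynomial

variable {R σ τ : Type*} [CommSemiring R]

lemma eval_aeval_sumElim_X_C (x : σ → R) (y : τ → R) (p : MvPolynomial (σ ⊕ τ) R) :
    eval x (aeval (Sum.elim X (C ∘ y)) p) = eval (Sum.elim x y) p := by
  simpa using (aeval_sumElim p y x).symm

def fiberPolynomials (Y : Set (τ → R)) (P : Set (MvPolynomial (σ ⊕ τ) R)) :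
    Set (MvPolynomial σ R) :=
  ⋃ y ∈ Y, aeval (Sum.elim X (C ∘ y)) '' P

lemma exists_mem_fiberPolynomials_eval_ne_zero_iff (Y : Set (τ → R))
    (P : Set (MvPolynomial (σ ⊕ τ) R)) (x : σ → R) :
    (∃ q ∈ fiberPolynomials Y P, eval x q ≠ 0) ↔
      ∃ y ∈ Y, ∃ p ∈ P, eval (Sum.elim x y) p ≠ 0 := by
  simp only [fiberPolynomials, Set.mem_iUnion, Set.mem_image, exists_prop]
  constructor
  · rintro ⟨_, ⟨y, hy, p, hp, rfl⟩, hne⟩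
    exact ⟨y, hy, p, hp, by rwa [eval_aeval_sumElim_X_C] at hne⟩
  · rintro ⟨y, hy, p, hp, hne⟩
    exact ⟨_, ⟨y, hy, p, hp, rfl⟩, by rwa [eval_aeval_sumElim_X_C]⟩

end MvPolynomial

theorem stmt12_general {F : Type*} [Field F] {m n : ℕ}
    (X : Set (Fin m → F)) (Y : Set (Fin n → F))
    (P : Set (MvPolynomial (Fin m ⊕ Fin n) F)) :
    ∃ Q : Set (MvPolynomial (Fin m) F),
      {x ∈ X | ∃ y ∈ Y, ¬ ∀ p ∈ P, MvPolynomial.eval (Sum.elim x y) p = 0}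
        = X \ {x | ∀ q ∈ Q, MvPolynomial.eval x q = 0} := by
  refine ⟨MvPolynomial.fiberPolynomials Y P, ?_⟩
  ext x
  simp only [Set.mem_sdiff, Set.mem_ofPred_eq, not_forall, exists_prop]
  rw [MvPolynomial.exists_mem_fiberPolynomials_eval_ne_zero_iff]

theorem stmt12 {F : Type*} [Field F] {m n : ℕ}
    (X : Set (Fin m → F)) (Y : Set (Fin n → F))
    (hX : ∃ I : Set (MvPolynomial (Fin m) F),
      X = {x | ∀ p ∈ I, MvPolynomial.eval x p = 0})
    (hY : ∃ J : Set (MvPolynomial (Fin n) F),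
      Y = {y | ∀ p ∈ J, MvPolynomial.eval y p = 0})
    (P : Set (MvPolynomial (Fin m ⊕ Fin n) F)) :
    ∃ Q : Set (MvPolynomial (Fin m) F),
      {x ∈ X | ∃ y ∈ Y, ¬ ∀ p ∈ P, MvPolynomial.eval (Sum.elim x y) p = 0}
        = X \ {x | ∀ q ∈ Q, MvPolynomial.eval x q = 0} :=
  stmt12_general X Y P
end
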